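/- Let M be an MSC over P and Σ, let p, q ∈ P, let π, π' ∈ Π_{p,q}, and let f ∈ E_q such that last_π(f) ≠ ⊥ and last_{π'}(f) ≠ ⊥. Then π ≼_f π' if and only if f_{π, →*π'}(f) ≤ f (in the order on E ∪ {⊥,⊤}), where →*π' denotes the path expression consisting of the letter →* followed by π'. -/

import Mathlib

/-!
Both `last_π(f)` and `g' := last_{π'}(f)` lie on process `p`, so `last_π(f) ≤ g'` means
`last_π(f) →* g'`, which yields a `→*π'`-path from `last_π(f)` to `f`. Conversely, FIFO makes
`π'`-sources monotone along process `q`: a `→*π'`-path from `last_π(f)` to an event below `f`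
gives a `π'`-source of `f` above `last_π(f)`, hence below `g'`.
-/

namespace Gossip

/-- Events extended with bottom and top elements. -/
inductive ExtEv (E : Type) : Type where
  | bot : ExtEv E
  | evt (e : E) : ExtEv E
  | top : ExtEv E

/-- A message sequence chart (MSC) over processes `P`, alphabet `A`,
with (finite, nonempty) set of events `E`. -/
structure MSC (P A E : Type) : Type where
  fintypeE : Fintype E
  nonemptyE : Nonempty E
  loc : E → P
  lab : E → A
  /-- process successor relation `→` -/
  next : E → E → Prop
  /-- message relation `◁` -/
  msg : E → E → Prop
  next_loc : ∀ {e f : E}, next e f → loc e = loc f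
  next_irrefl : ∀ e : E, ¬ next e e
  next_right_unique : ∀ {e f f' : E}, next e f → next e f' → f = f'
  next_left_unique : ∀ {e e' f : E}, next e f → next e' f → e = e'
  next_total : ∀ e f : E, loc e = loc f →
      Relation.ReflTransGen next e f ∨ Relation.ReflTransGen next f e
  msg_loc : ∀ {e f : E}, msg e f → loc e ≠ loc f
  /-- every event belongs to at most one pair of `◁` -/
  msg_unique : ∀ {e f e' f' : E}, msg e f → msg e' f' →
      (e = e' ∨ e = f' ∨ f = e' ∨ f = f') → e = e' ∧ f = f'
  fifo : ∀ {e f e' f' : E}, msg e f → msg e' f' → loc e = loc e' → loc f = loc f' →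
      (Relation.ReflTransGen next e e' ↔ Relation.ReflTransGen next f f')
  /-- `≤ = (→ ∪ ◁)*` is a partial order -/
  causal_antisymm : ∀ {e f : E},
      Relation.ReflTransGen (fun x y => next x y ∨ msg x y) e f →
      Relation.ReflTransGen (fun x y => next x y ∨ msg x y) f e → e = f

namespace MSC

variable {P A E B : Type}

/-- the causal order `≤ = (→ ∪ ◁)*` -/
def le (M : MSC P A E) : E → E → Prop :=
  Relation.ReflTransGen (fun x y => M.next x y ∨ M.msg x y)

/-- the strict causal order `<` -/
def lt (M : MSC P A E) (e f : E) : Prop := M.le e f ∧ e ≠ f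

/-- `→*` -/
def nextStar (M : MSC P A E) : E → E → Prop := Relation.ReflTransGen M.next

/-- the causal order extended to `E ∪ {⊥,⊤}` with `⊥ < e < ⊤` -/
def extLe (M : MSC P A E) : ExtEv E → ExtEv E → Prop
  | .bot, _ => True
  | _, .top => True
  | .evt e, .evt f => M.le e f
  | _, _ => False

def extLt (M : MSC P A E) (x y : ExtEv E) : Prop := M.extLe x y ∧ x ≠ y

/-- replace the labelling of an MSC (e.g. to pair it with an extra labelling) -/
def relabel (M : MSC P A E) (μ : E → B) : MSC P B E where
  fintypeE := M.fintypeE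
  nonemptyE := M.nonemptyE
  loc := M.loc
  lab := μ
  next := M.next
  msg := M.msg
  next_loc := M.next_loc
  next_irrefl := M.next_irrefl
  next_right_unique := M.next_right_unique
  next_left_unique := M.next_left_unique
  next_total := M.next_total
  msg_loc := M.msg_loc
  msg_unique := M.msg_unique
  fifo := M.fifo
  causal_antisymm := M.causal_antisymm

end MSC

/-- letters of path expressions: `→`, `→*`, `p▷q`, `⟨a⟩` -/
inductive PathLetter (P A : Type) : Type where
  | next : PathLetter P A
  | nextStar : PathLetter P A
  | msg (p q : P) : PathLetter P A
  | lab (a : A) : PathLetter P A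

/-- path expressions: finite words over `Γ` -/
abbrev PathExpr (P A : Type) := List (PathLetter P A)

variable {P A E : Type}

def letterSem (M : MSC P A E) : PathLetter P A → E → E → Prop
  | .next => M.next
  | .nextStar => M.nextStar
  | .msg p q => fun e f => M.loc e = p ∧ M.loc f = q ∧ M.msg e f
  | .lab a => fun e f => e = f ∧ M.lab e = a

/-- `⟦π⟧` -/
def pathSem (M : MSC P A E) : PathExpr P A → E → E → Prop
  | [] => fun e f => e = f
  | l :: π => fun e g => ∃ f, letterSem M l e f ∧ pathSem M π f g

def letterComp : PathLetter P A → P → P → Prop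
  | .msg p q => fun x y => x = p ∧ y = q
  | _ => fun x y => x = y

/-- `Comp(π)`; `π ∈ Π_{p,q}` iff `pcomp π p q` -/
def pcomp : PathExpr P A → P → P → Prop
  | [] => fun x y => x = y
  | l :: π => fun x z => ∃ y, letterComp l x y ∧ pcomp π y z

/-- `IsLast M π e x` holds iff `x = last_π(e)` (with `x = ⊥` iff no `π`-path into `e`). -/
def IsLast (M : MSC P A E) (π : PathExpr P A) (e : E) : ExtEv E → Prop
  | .bot => ∀ f, ¬ pathSem M π f e
  | .evt g => pathSem M π g e ∧ ∀ f, pathSem M π f e → M.le f g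
  | .top => False

/-- `IsFirst M π e x` holds iff `x = first_π(e)` (with `x = ⊤` iff no `π`-path out of `e`). -/
def IsFirst (M : MSC P A E) (π : PathExpr P A) (e : E) : ExtEv E → Prop
  | .top => ∀ f, ¬ pathSem M π e f
  | .evt g => pathSem M π e g ∧ ∀ f, pathSem M π e f → M.le g f
  | .bot => False

/-- `IsFa M π π' e x` holds iff `x = f_{π,π'}(e) = first_{π'}(last_π(e))`, with
`first_{π'}(⊥) := ⊥`. -/
def IsFa (M : MSC P A E) (π π' : PathExpr P A) (e : E) (x : ExtEv E) : Prop :=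
  (IsLast M π e ExtEv.bot ∧ x = ExtEv.bot) ∨
    ∃ g, IsLast M π e (ExtEv.evt g) ∧ IsFirst M π' g x

/-- `IsLastProc M p e x` holds iff `x = last_p(e)`, the maximal event of process `p`
strictly below `e` (`⊥` if none). -/
def IsLastProc (M : MSC P A E) (p : P) (e : E) : ExtEv E → Prop
  | .bot => ∀ f, M.loc f = p → ¬ M.lt f e
  | .evt g => M.loc g = p ∧ M.lt g e ∧ ∀ f, M.loc f = p → M.lt f e → M.le f g
  | .top => False

/-- `π ≼_e π'`, i.e. `last_π(e) ≤ last_{π'}(e)` -/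
def ple (M : MSC P A E) (π π' : PathExpr P A) (e : E) : Prop :=
  ∃ x y, IsLast M π e x ∧ IsLast M π' e y ∧ M.extLe x y

def gossipSuffix : P → List P → PathExpr P A
  | _, [] => []
  | p, q :: w => PathLetter.msg p q :: PathLetter.nextStar :: gossipSuffix q w

/-- `π_w` for `w = p :: rest` -/
def gossipExpr (p : P) (w : List P) : PathExpr P A :=
  match w with
  | [] => [PathLetter.next, PathLetter.nextStar]
  | _ :: _ => PathLetter.nextStar :: gossipSuffix p w

/-- `π ∈ Π^gossip` -/
def IsGossip (π : PathExpr P A) : Prop :=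
  ∃ (p : P) (w : List P), (p :: w).Nodup ∧ π = gossipExpr p w

/-- actions of a CFM transition -/
inductive CAct (P A Msg : Type) : Type where
  | internal (a : A) : CAct P A Msg
  | send (a : A) (m : Msg) (q : P) : CAct P A Msg
  | recv (a : A) (m : Msg) (q : P) : CAct P A Msg

def CAct.labelOf {P A Msg : Type} : CAct P A Msg → A
  | .internal a => a
  | .send a _ _ => a
  | .recv a _ _ => a

/-- a communicating finite-state machine over `P` and `A` -/
structure CFM (P A : Type) : Type 1 where
  Msg : Type
  msgFin : Fintype Msg
  S : Type
  sFin : Fintype S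
  ι : P → S
  Δ : P → Set (S × CAct P A Msg × S)
  Acc : Set (P → S)
  wf_send : ∀ p s a m q s', (s, CAct.send a m q, s') ∈ Δ p → q ≠ p
  wf_recv : ∀ p s a m q s', (s, CAct.recv a m q, s') ∈ Δ p → q ≠ p

namespace CFM

variable {P A E : Type}

/-- `ρ` is a run of the CFM `C` on the MSC `M` -/
def IsRun (C : CFM P A) (M : MSC P A E) (ρ : E → C.S × CAct P A C.Msg × C.S) : Prop :=
  (∀ e, ρ e ∈ C.Δ (M.loc e)) ∧
  (∀ e, ((ρ e).2.1).labelOf = M.lab e) ∧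
  (∀ e, (¬ ∃ f, M.next f e) → (ρ e).1 = C.ι (M.loc e)) ∧
  (∀ e f, M.next e f → (ρ e).2.2 = (ρ f).1) ∧
  (∀ e, (¬ ∃ f, M.msg e f) → (¬ ∃ f, M.msg f e) → ∃ a, (ρ e).2.1 = CAct.internal a) ∧
  (∀ e f, M.msg e f → ∃ m, (ρ e).2.1 = CAct.send (M.lab e) m (M.loc f) ∧
      (ρ f).2.1 = CAct.recv (M.lab f) m (M.loc e))

/-- the run `ρ` is accepting -/
def IsAccepting (C : CFM P A) (M : MSC P A E)
    (ρ : E → C.S × CAct P A C.Msg × C.S) : Prop :=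
  ∃ s : P → C.S, s ∈ C.Acc ∧ ∀ p,
    ((∃ e, M.loc e = p) → ∃ e, M.loc e = p ∧ (¬ ∃ f, M.next e f) ∧ s p = (ρ e).2.2) ∧
    ((¬ ∃ e, M.loc e = p) → s p = C.ι p)

/-- `M ∈ L(C)` -/
def Accepts (C : CFM P A) (M : MSC P A E) : Prop :=
  ∃ ρ, C.IsRun M ρ ∧ C.IsAccepting M ρ

/-- deterministic CFMs -/
def Deterministic (C : CFM P A) : Prop :=
  ∀ p s γ₁ s₁ γ₂ s₂, (s, γ₁, s₁) ∈ C.Δ p → (s, γ₂, s₂) ∈ C.Δ p →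
    CAct.labelOf γ₁ = CAct.labelOf γ₂ →
    ((∀ a₁ a₂, γ₁ = CAct.internal a₁ → γ₂ = CAct.internal a₂ → s₁ = s₂) ∧
     (∀ a₁ m₁ a₂ m₂ q, γ₁ = CAct.send a₁ m₁ q → γ₂ = CAct.send a₂ m₂ q →
        s₁ = s₂ ∧ m₁ = m₂) ∧
     (∀ a₁ a₂ m q, γ₁ = CAct.recv a₁ m q → γ₂ = CAct.recv a₂ m q → s₁ = s₂))

end CFM

/-- acceptance of the extended MSC `(M, ξ)` by a CFM over a product alphabet -/
def AcceptsExt {P A E Ξ : Type} (C : CFM P (A × Ξ)) (M : MSC P A E) (ξ : E → Ξ) : Prop :=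
  C.Accepts (M.relabel fun e => (M.lab e, ξ e))

/-- apply `μ` to an extended event, sending both `⊥` and `⊤` to `none` -/
def extToOptMap {E Θ : Type} (μ : E → Θ) : ExtEv E → Option Θ
  | .evt g => some (μ g)
  | _ => none

/-- apply `μ` to an extended event, preserving `⊥` and `⊤` -/
def extMap {E Θ : Type} (μ : E → Θ) : ExtEv E → ExtEv Θ
  | .bot => ExtEv.bot
  | .evt g => ExtEv.evt (μ g)
  | .top => ExtEv.top

/-- formulas of the temporal logic TL -/
inductive TL (P A : Type) : Type where
  | lab (a : A) : TL P A
  | proc (p : P) : TL P A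
  | disj (φ ψ : TL P A) : TL P A
  | neg (φ : TL P A) : TL P A
  | co (φ : TL P A) : TL P A
  | tuntil (φ ψ : TL P A) : TL P A
  | tsince (φ ψ : TL P A) : TL P A

/-- `M, e ⊨ φ` -/
def TLsat (M : MSC P A E) : TL P A → E → Prop
  | .lab a, e => M.lab e = a
  | .proc p, e => M.loc e = p
  | .disj φ ψ, e => TLsat M φ e ∨ TLsat M ψ e
  | .neg φ, e => ¬ TLsat M φ e
  | .co φ, e => ∃ f, ¬ M.le e f ∧ ¬ M.le f e ∧ TLsat M φ f
  | .tuntil φ ψ, e => ∃ f, M.lt e f ∧ TLsat M ψ f ∧ ∀ g, M.lt e g → M.lt g f → TLsat M φ g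
  | .tsince φ ψ, e => ∃ f, M.lt f e ∧ TLsat M ψ f ∧ ∀ g, M.lt f g → M.lt g e → TLsat M φ g

namespace MSC

variable {M : MSC P A E}

theorem le_of_nextStar {e f : E} (h : M.nextStar e f) : M.le e f :=
  Relation.ReflTransGen.mono (fun _ _ => Or.inl) _ _ h

theorem loc_eq_of_nextStar {e f : E} (h : M.nextStar e f) : M.loc e = M.loc f := by
  induction h with
  | refl => rfl
  | tail _ hstep ih => exact ih.trans (M.next_loc hstep)

theorem nextStar_of_le_of_loc_eq {e f : E} (h : M.le e f) (hl : M.loc e = M.loc f) :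
    M.nextStar e f :=
  (M.next_total e f hl).elim id fun hfe => M.causal_antisymm h (le_of_nextStar hfe) ▸ .refl

end MSC

section Paths

variable {M : MSC P A E}

theorem letterComp.loc_eq_iff {l : PathLetter P A} {p q : P} {e f : E}
    (hc : letterComp l p q) (h : letterSem M l e f) : M.loc e = p ↔ M.loc f = q := by
  cases l <;> simp only [letterComp, letterSem] at hc h
  case next => rw [hc, M.next_loc h]
  case nextStar => rw [hc, MSC.loc_eq_of_nextStar h]
  case msg => exact iff_of_true (h.1.trans hc.1.symm) (h.2.1.trans hc.2.symm)
  case lab => rw [hc, h.1]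

theorem pcomp.loc_eq_iff {π : PathExpr P A} {p q : P} {e f : E}
    (hc : pcomp π p q) (h : pathSem M π e f) : M.loc e = p ↔ M.loc f = q := by
  induction π generalizing p e with
  | nil =>
    simp only [pcomp, pathSem] at hc h
    rw [hc, h]
  | cons l π ih =>
    obtain ⟨y, hly, hcy⟩ := hc
    obtain ⟨m, hl, hπ⟩ := h
    exact (hly.loc_eq_iff hl).trans (ih hcy hπ)

theorem pathSem_append (σ τ : PathExpr P A) (e g : E) :
    pathSem M (σ ++ τ) e g ↔ ∃ m, pathSem M σ e m ∧ pathSem M τ m g := by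
  induction σ generalizing e with
  | nil => simp [pathSem]
  | cons l σ ih => simp only [List.cons_append, pathSem, ih]; grind

theorem pathSem_concat (σ : PathExpr P A) (l : PathLetter P A) (e g : E) :
    pathSem M (σ ++ [l]) e g ↔ ∃ m, pathSem M σ e m ∧ letterSem M l m g := by
  simp [pathSem_append, pathSem]

theorem letterSem_or_nextStar_of_nextStar {l : PathLetter P A} {m h m' f : E}
    (hl : letterSem M l m h) (hhf : M.nextStar h f) (hl' : letterSem M l m' f) :
    letterSem M l m f ∨ M.nextStar m m' := by
  cases l with
  | next =>
    right
    rcases Relation.ReflTransGen.cases_tail hhf with rfl | ⟨c, hhc, hcf⟩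
    · exact M.next_left_unique hl hl' ▸ .refl
    · exact M.next_left_unique hcf hl' ▸ Relation.ReflTransGen.head hl hhc
  | nextStar => exact Or.inl (Relation.ReflTransGen.trans hl hhf)
  | msg p₀ q₀ =>
    obtain ⟨hm, hh, hmh⟩ := hl
    obtain ⟨hm', hf, hm'f⟩ := hl'
    exact Or.inr ((M.fifo hmh hm'f (hm.trans hm'.symm) (hh.trans hf.symm)).2 hhf)
  | lab a =>
    obtain ⟨rfl, -⟩ := hl
    obtain ⟨rfl, -⟩ := hl'
    exact Or.inr hhf

/-- FIFO makes `π`-sources monotone along a process. -/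
theorem exists_le_pathSem_of_nextStar {π : PathExpr P A} {e h f d : E}
    (he : pathSem M π e h) (hhf : M.nextStar h f) (hd : pathSem M π d f) :
    ∃ e', pathSem M π e' f ∧ M.le e e' := by
  induction π using List.reverseRecOn generalizing e h f d with
  | nil =>
    obtain rfl : e = h := he
    exact ⟨f, rfl, MSC.le_of_nextStar hhf⟩
  | append_singleton σ l ih =>
    obtain ⟨m, heσ, hl⟩ := (pathSem_concat σ l e h).1 he
    obtain ⟨m', hdσ, hl'⟩ := (pathSem_concat σ l d f).1 hd
    rcases letterSem_or_nextStar_of_nextStar hl hhf hl' with hmf | hmm'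
    · exact ⟨e, (pathSem_concat σ l e f).2 ⟨m, heσ, hmf⟩, .refl⟩
    · obtain ⟨e', he', hee'⟩ := ih heσ hmm' hdσ
      exact ⟨e', (pathSem_concat σ l e' f).2 ⟨m', he', hl'⟩, hee'⟩

end Paths

section LastFirst

variable {M : MSC P A E} {π π' : PathExpr P A} {e : E} {z : ExtEv E}

theorem IsLast.eq {g g' : E} (h : IsLast M π e (.evt g)) (h' : IsLast M π e (.evt g')) :
    g = g' :=
  M.causal_antisymm (h'.2 g h.1) (h.2 g' h'.1)

theorem IsFirst.extLe_of_pathSem {f : E} (hz : IsFirst M π e z) (h : pathSem M π e f) :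
    M.extLe z (.evt f) := by
  cases z with
  | bot => exact hz.elim
  | evt g => exact hz.2 f h
  | top => exact (hz f h).elim

theorem IsFa.eq_bot_of_isLast_bot (hz : IsFa M π π' e z) (h : IsLast M π e .bot) :
    z = .bot := by
  rcases hz with ⟨-, rfl⟩ | ⟨g, hg, -⟩
  · rfl
  · exact (h g hg.1).elim

theorem IsFa.isFirst_of_isLast {g : E} (hz : IsFa M π π' e z) (hg : IsLast M π e (.evt g)) :
    IsFirst M π' g z := by
  rcases hz with ⟨hbot, -⟩ | ⟨g₀, hg₀, hz⟩
  · exact (hbot g hg.1).elim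
  · exact hg₀.eq hg ▸ hz

theorem le_iff_extLe_of_isLast_of_isFirst {p q : P} (hπ' : pcomp π' p q) {f g g' : E}
    (hf : M.loc f = q) (hg : M.loc g = p) (hg' : IsLast M π' f (.evt g'))
    (hz : IsFirst M (.nextStar :: π') g z) :
    M.le g g' ↔ M.extLe z (.evt f) := by
  have hg'p : M.loc g' = p := (hπ'.loc_eq_iff hg'.1).2 hf
  constructor
  · intro hgg'
    exact hz.extLe_of_pathSem
      ⟨g', MSC.nextStar_of_le_of_loc_eq hgg' (hg.trans hg'p.symm), hg'.1⟩
  · intro hzf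
    cases z with
    | bot => exact hz.elim
    | top => exact hzf.elim
    | evt h =>
      obtain ⟨⟨g₁, hgg₁, hg₁h⟩, -⟩ := hz
      have hhq : M.loc h = q :=
        (hπ'.loc_eq_iff hg₁h).1 ((MSC.loc_eq_of_nextStar hgg₁).symm.trans hg)
      obtain ⟨e', he', hg₁e'⟩ := exists_le_pathSem_of_nextStar hg₁h
        (MSC.nextStar_of_le_of_loc_eq hzf (hhq.trans hf.symm)) hg'.1
      exact (MSC.le_of_nextStar hgg₁).trans (hg₁e'.trans (hg'.2 e' he'))

end LastFirst

end Gossip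
open Gossip in
theorem stmt5_general {P A E : Type} (M : MSC P A E)
    (p q : P) (π π' : PathExpr P A)
    (hπ : pcomp π p q) (hπ' : pcomp π' p q)
    (f : E) (hf : M.loc f = q)
    (x x' z : ExtEv E)
    (hx : IsLast M π f x) (hx' : IsLast M π' f x')
    (hx'b : x' ≠ ExtEv.bot)
    (hz : IsFa M π (PathLetter.nextStar :: π') f z) :
    M.extLe x x' ↔ M.extLe z (ExtEv.evt f) := by
  cases x with
  | bot =>
    rw [hz.eq_bot_of_isLast_bot hx]
    exact iff_of_true trivial trivial
  | top => exact hx.elim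
  | evt g =>
    cases x' with
    | bot => exact absurd rfl hx'b
    | top => exact hx'.elim
    | evt g' =>
      exact le_iff_extLe_of_isLast_of_isFirst hπ' hf ((hπ.loc_eq_iff hx.1).2 hf) hx'
        (hz.isFirst_of_isLast hx)

open Gossip in
/-- if `last_π(f) ≠ ⊥` and `last_{π'}(f) ≠ ⊥`, then
`π ≼_f π'` iff `f_{π, →*π'}(f) ≤ f`. -/
theorem stmt5 {P A E : Type} [Fintype P] [Fintype A] (M : MSC P A E)
    (p q : P) (π π' : PathExpr P A)
    (hπ : pcomp π p q) (hπ' : pcomp π' p q)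
    (f : E) (hf : M.loc f = q)
    (x x' z : ExtEv E)
    (hx : IsLast M π f x) (hx' : IsLast M π' f x')
    (hxb : x ≠ ExtEv.bot) (hx'b : x' ≠ ExtEv.bot)
    (hz : IsFa M π (PathLetter.nextStar :: π') f z) :
    M.extLe x x' ↔ M.extLe z (ExtEv.evt f) :=
  stmt5_general M p q π π' hπ hπ' f hf x x' z hx hx' hx'b hz
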